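/- Let n ≥ 2, let Q be the quadratic form on ℝⁿ given by Q(v) = −‖v‖², let ι : ℝⁿ → CliffordAlgebra Q be the canonical embedding, and let (e_i) be the standard orthonormal basis of ℝⁿ. Define F : ℝⁿ \ {0} → CliffordAlgebra Q by F(x) = ‖x‖^{−n} • ι(x). Then F is annihilated by the Euclidean Dirac operator away from the origin: for every x ≠ 0, ∑_{i} ι(e_i) * (fderiv ℝ F x (e_i)) = 0. -/

import Mathlib

/-!
Writing `F = f • ι` with the radial weight `f(y) = ‖y‖⁻ⁿ`, the Leibniz rule splits `DF(x)` into
`f(x) ∑ᵢ ι(eᵢ)²`, which is `-n f(x)` by the Clifford relation, and `ι(∇f(x)) ι(x)`. Since `f` is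
radial, `∇f(x) = c x` with `c = -n ‖x‖⁻ⁿ⁻²`, so the second term is `c ι(x)² = n ‖x‖⁻ⁿ`, and the two
cancel.
-/

open scoped RealInnerProductSpace

section Dirac

variable {E : Type*} [NormedAddCommGroup E] [InnerProductSpace ℝ E]
  {A : Type*} [NormedRing A] [NormedAlgebra ℝ A] {κ : Type*} [Fintype κ]

noncomputable def diracOp (ι : E →ₗ[ℝ] A) (b : OrthonormalBasis κ ℝ E) (φ : E → A) (x : E) : A :=
  ∑ i, ι (b i) * fderiv ℝ φ x (b i)

theorem sum_clifford_mul_self {ι : E →ₗ[ℝ] A} (hι : ∀ v, ι v * ι v = algebraMap ℝ A (-‖v‖ ^ 2))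
    (b : OrthonormalBasis κ ℝ E) :
    ∑ i, ι (b i) * ι (b i) = algebraMap ℝ A (-Fintype.card κ) := by
  simp [hι, b.orthonormal.1, Finset.card_univ]

theorem sum_inner_smul_clifford (ι : E →ₗ[ℝ] A) (b : OrthonormalBasis κ ℝ E) (x : E) :
    ∑ i, ⟪x, b i⟫ • ι (b i) = ι x := by
  simp_rw [real_inner_comm _ x, ← map_smul, ← map_sum, b.sum_repr']

theorem diracOp_smul_clifford [FiniteDimensional ℝ E] {ι : E →ₗ[ℝ] A}
    (hι : ∀ v, ι v * ι v = algebraMap ℝ A (-‖v‖ ^ 2)) (b : OrthonormalBasis κ ℝ E)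
    {f : E → ℝ} {c : ℝ} {x : E}
    (hf : HasFDerivAt f (c • innerSL ℝ x) x) :
    diracOp ι b (fun y => f y • ι y) x =
      algebraMap ℝ A (-(Fintype.card κ * f x + c * ‖x‖ ^ 2)) := by
  have hderiv : ∀ v, fderiv ℝ (fun y => f y • ι y) x v = f x • ι v + (c * ⟪x, v⟫) • ι x := by
    intro v
    have hFd : HasFDerivAt (fun y => f y • ι y) _ x := hf.smul ι.toContinuousLinearMap.hasFDerivAt
    rw [hFd.fderiv]
    simp [mul_smul]
  simp only [diracOp, hderiv, mul_add, mul_smul_comm, Finset.sum_add_distrib, ← Finset.smul_sum]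
  calc f x • ∑ i, ι (b i) * ι (b i) + ∑ i, (c * ⟪x, b i⟫) • (ι (b i) * ι x)
      = f x • ∑ i, ι (b i) * ι (b i) + c • ((∑ i, ⟪x, b i⟫ • ι (b i)) * ι x) := by
        simp only [Finset.sum_mul, Finset.smul_sum, smul_mul_assoc, mul_smul]
    _ = f x • algebraMap ℝ A (-Fintype.card κ) + c • (ι x * ι x) := by
        rw [sum_clifford_mul_self hι, sum_inner_smul_clifford]
    _ = algebraMap ℝ A (-(Fintype.card κ * f x + c * ‖x‖ ^ 2)) := by
        rw [hι, Algebra.smul_def, Algebra.smul_def, ← map_mul, ← map_mul, ← map_add]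
        congr 1
        ring

end Dirac

theorem hasFDerivAt_inv_norm_pow {E : Type*} [NormedAddCommGroup E] [InnerProductSpace ℝ E]
    {x : E} (hx : x ≠ 0) (n : ℕ) :
    HasFDerivAt (fun y : E => (‖y‖ ^ n)⁻¹) ((-(n : ℝ) / ‖x‖ ^ (n + 2)) • innerSL ℝ x) x := by
  have hpow : ∀ y : E, (‖y‖ ^ n)⁻¹ = (‖y‖ ^ 2) ^ (-(n : ℝ) / 2) := by
    intro y
    rw [← Real.rpow_natCast_mul (norm_nonneg y),
      show ((2 : ℕ) : ℝ) * (-(n : ℝ) / 2) = -n by push_cast; ring,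
      Real.rpow_neg (norm_nonneg y), Real.rpow_natCast]
  have hx2 : ‖x‖ ^ 2 ≠ 0 := by positivity
  rw [funext hpow]
  convert (hasStrictFDerivAt_norm_sq x).hasFDerivAt.rpow_const (Or.inl hx2) using 1
  rw [← Nat.cast_smul_eq_nsmul ℝ, smul_smul, Real.rpow_sub_one hx2, ← hpow]
  congr 1
  field_simp
  ring

theorem dirac_annihilates_singular_term_general (n : ℕ)
    (A : Type*) [NormedRing A] [NormedAlgebra ℝ A]
    (ι : EuclideanSpace ℝ (Fin n) →ₗ[ℝ] A)
    (hι : ∀ v : EuclideanSpace ℝ (Fin n), ι v * ι v = algebraMap ℝ A (-‖v‖ ^ 2))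
    (F : EuclideanSpace ℝ (Fin n) → A)
    (hF : ∀ x, F x = (‖x‖ ^ n)⁻¹ • ι x)
    (x : EuclideanSpace ℝ (Fin n)) (hx : x ≠ 0) :
    ∑ i : Fin n,
      ι (EuclideanSpace.single i (1 : ℝ)) *
        fderiv ℝ F x (EuclideanSpace.single i (1 : ℝ)) = 0 := by
  have hD := diracOp_smul_clifford hι (EuclideanSpace.basisFun (Fin n) ℝ)
    (hasFDerivAt_inv_norm_pow hx n)
  simp only [diracOp, EuclideanSpace.basisFun_apply, Fintype.card_fin, ← funext hF] at hD
  have hx_norm : ‖x‖ ≠ 0 := norm_ne_zero_iff.mpr hx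
  rw [hD, ← map_zero (algebraMap ℝ A)]
  congr 1
  field_simp
  ring

/-- The spinor field `F(x) = ‖x‖^{-n} • ι(x)` (the singular leading term of the Green
function of the Dirac operator) is annihilated by the Euclidean Dirac operator
`Dφ(x) = ∑ᵢ ι(eᵢ) * ∂ᵢφ(x)` away from the origin.

Since `fderiv` requires a normed codomain and the Clifford algebra of the
negative-definite form `Q(v) = -‖v‖²` carries no canonical norm in Mathlib, we state
this for an arbitrary normed `ℝ`-algebra `A` together with a linear map
`ι : ℝⁿ →ₗ[ℝ] A` satisfying the defining Clifford relation
`ι(v) * ι(v) = Q(v)·1 = -‖v‖²·1` (so that `ι(eᵢ)² = -1`); the canonical embedding of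
`ℝⁿ` into `CliffordAlgebra Q` is exactly such a map. -/
theorem dirac_annihilates_singular_term (n : ℕ) (hn : 2 ≤ n)
    (A : Type*) [NormedRing A] [NormedAlgebra ℝ A]
    (ι : EuclideanSpace ℝ (Fin n) →ₗ[ℝ] A)
    (hι : ∀ v : EuclideanSpace ℝ (Fin n), ι v * ι v = algebraMap ℝ A (-‖v‖ ^ 2))
    (F : EuclideanSpace ℝ (Fin n) → A)
    (hF : ∀ x, F x = (‖x‖ ^ n)⁻¹ • ι x)
    (x : EuclideanSpace ℝ (Fin n)) (hx : x ≠ 0) :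
    ∑ i : Fin n,
      ι (EuclideanSpace.single i (1 : ℝ)) *
        fderiv ℝ F x (EuclideanSpace.single i (1 : ℝ)) = 0 :=
  dirac_annihilates_singular_term_general n A ι hι F hF x hx
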